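/- The polynomial p(x,y) = x^19 + (855/56)x^17y + (646/7)x^15y^2 + (1938/7)x^13y^3 + (2907/7)x^11y^4 + (3553/14)x^9y^5 + (323/7)x^3y^8 + (209/56)xy^17 + (323/28)xy^9 + (209/56)xy + y^19 satisfies p(x, 1-x) = 1 as a polynomial identity over ℚ, has all coefficients nonnegative, and has exactly 11 nonzero monomials. -/
import Mathlib


open MvPolynomial

noncomputable def p7 : MvPolynomial (Fin 2) ℚ :=
  X 0 ^ 19 + C (855/56) * X 0 ^ 17 * X 1 + C (646/7) * X 0 ^ 15 * X 1 ^ 2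
    + C (1938/7) * X 0 ^ 13 * X 1 ^ 3 + C (2907/7) * X 0 ^ 11 * X 1 ^ 4
    + C (3553/14) * X 0 ^ 9 * X 1 ^ 5 + C (323/7) * X 0 ^ 3 * X 1 ^ 8
    + C (209/56) * X 0 * X 1 ^ 17 + C (323/28) * X 0 * X 1 ^ 9
    + C (209/56) * X 0 * X 1 + X 1 ^ 19

noncomputable def d7 (a b : ℕ) : Fin 2 →₀ ℕ := Finsupp.single 0 a + Finsupp.single 1 b

lemma d7_apply0 (a b : ℕ) : d7 a b 0 = a := by simp [d7, Finsupp.single_apply]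

lemma d7_apply1 (a b : ℕ) : d7 a b 1 = b := by simp [d7, Finsupp.single_apply]

lemma d7_eq_iff {a b a' b' : ℕ} : d7 a b = d7 a' b' ↔ a = a' ∧ b = b' := by
  constructor
  · intro h
    constructor
    · have := DFunLike.congr_fun h 0
      simpa [d7_apply0] using this
    · have := DFunLike.congr_fun h 1
      simpa [d7_apply1] using this
  · rintro ⟨rfl, rfl⟩; rfl

lemma p7_eq : p7 = monomial (d7 19 0) 1 + monomial (d7 17 1) (855/56)
    + monomial (d7 15 2) (646/7) + monomial (d7 13 3) (1938/7)
    + monomial (d7 11 4) (2907/7) + monomial (d7 9 5) (3553/14)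
    + monomial (d7 3 8) (323/7) + monomial (d7 1 17) (209/56)
    + monomial (d7 1 9) (323/28) + monomial (d7 1 1) (209/56)
    + monomial (d7 0 19) 1 := by
  simp [p7, d7, X, monomial_pow, monomial_mul, C_mul_monomial, Finsupp.smul_single]

theorem stmt_7 :
    (∀ x y : ℚ, x + y = 1 → eval ![x, y] p7 = 1) ∧
    (∀ m, 0 ≤ p7.coeff m) ∧ p7.support.card = 11 := by
  refine ⟨?_, ?_, ?_⟩
  · intro x y h
    have hy : y = 1 - x := by linarith
    subst hy
    simp [p7]
    ring
  · intro m
    rw [p7_eq]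
    simp only [coeff_add]
    repeat' apply add_nonneg
    all_goals rw [coeff_monomial]; split <;> norm_num
  · have hsupp : p7.support = {d7 19 0, d7 17 1, d7 15 2, d7 13 3, d7 11 4,
        d7 9 5, d7 3 8, d7 1 17, d7 1 9, d7 1 1, d7 0 19} := by
      ext m
      rw [mem_support_iff, p7_eq]
      simp only [coeff_add, coeff_monomial, Finset.mem_insert, Finset.mem_singleton]
      constructor
      · intro h
        contrapose! h
        obtain ⟨h1, h2, h3, h4, h5, h6, h7, h8, h9, h10, h11⟩ := h
        simp [Ne.symm h1, Ne.symm h2, Ne.symm h3, Ne.symm h4, Ne.symm h5, Ne.symm h6, Ne.symm h7, Ne.symm h8, Ne.symm h9, Ne.symm h10, Ne.symm h11]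
      · rintro (rfl | rfl | rfl | rfl | rfl | rfl | rfl | rfl | rfl | rfl | rfl) <;>
          norm_num [d7_eq_iff]
    rw [hsupp]
    repeat rw [Finset.card_insert_of_notMem (by norm_num [d7_eq_iff])]
    rfl
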